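/- arXiv:1207.5500 — 2 statements merged into one kernel-verified Lean document; each statement's English description precedes it below -/
import Mathlib

section
/- For the q-state Potts model with q ≥ 2, d ≥ 3, parameters m = e^B ≥ 1 and θ = 1/(e^β − 1) > 0: every BP fixed point h ∈ Δ* admits ℓ ∈ {1, …, q}, a permutation π of {1, …, q} with π(1) = 1 whenever m > 1, and a constant z > 0 such that m·F(h_{π(1)}) = z, F(h_{π(σ)}) = z for all 2 ≤ σ ≤ q, h_{π(σ)} ≥ v for 2 ≤ σ ≤ ℓ, and h_{π(σ)} ≤ v for ℓ + 1 ≤ σ ≤ q. In particular every BP fixed point takes at most three distinct coordinate values. -/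
open Finset Filter MeasureTheory

noncomputable section

/-! ## Simplex, specifications, Bethe functional -/

/-- The simplex of probability vectors on `Fin q`. -/
def simplex (q : ℕ) : Set (Fin q → ℝ) :=
  {h | (∀ σ, 0 ≤ h σ) ∧ ∑ σ, h σ = 1}

/-- `(ψ, ψ̄)` is a valid specification: `ψ` symmetric nonnegative, `ψ̄` positive. -/
def IsSpec {q : ℕ} (ψ : Fin q → Fin q → ℝ) (ψb : Fin q → ℝ) : Prop :=
  (∀ σ σ', ψ σ σ' = ψ σ' σ) ∧ (∀ σ σ', 0 ≤ ψ σ σ') ∧ ∀ σ, 0 < ψb σ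

/-- Permissivity of the interaction `ψ`. -/
def Permissive {q : ℕ} (ψ : Fin q → Fin q → ℝ) : Prop :=
  ∃ σp, ∀ σ, 0 < ψ σ σp

/-- The belief propagation (Bethe) recursion. -/
def BPmap (q d : ℕ) (ψ : Fin q → Fin q → ℝ) (ψb : Fin q → ℝ) (h : Fin q → ℝ) :
    Fin q → ℝ := fun σ =>
  ψb σ * (∑ σ', ψ σ σ' * h σ') ^ (d - 1) /
    ∑ τ, ψb τ * (∑ σ', ψ τ σ' * h σ') ^ (d - 1)

/-- The set `Δ*` of fixed points of the BP recursion in the simplex. -/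
def bpFixedPts (q d : ℕ) (ψ : Fin q → Fin q → ℝ) (ψb : Fin q → ℝ) : Set (Fin q → ℝ) :=
  {h | h ∈ simplex q ∧ BPmap q d ψ ψb h = h}

/-- The Bethe free energy functional `Φ(h)`. -/
def PhiFun (q d : ℕ) (ψ : Fin q → Fin q → ℝ) (ψb : Fin q → ℝ) (h : Fin q → ℝ) : ℝ :=
  Real.log (∑ σ, ψb σ * (∑ σ', ψ σ σ' * h σ') ^ d) -
    ((d : ℝ) / 2) * Real.log (∑ σ, ∑ σ', ψ σ σ' * h σ * h σ')

/-- The Bethe prediction `Φ = sup_{h ∈ Δ*} Φ(h)`. -/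
def BetheP (q d : ℕ) (ψ : Fin q → Fin q → ℝ) (ψb : Fin q → ℝ) : ℝ :=
  sSup (PhiFun q d ψ ψb '' bpFixedPts q d ψ ψb)

/-! ## Edge simplex and edge Bethe functional -/

/-- Symmetric probability measures on `Fin q × Fin q`. -/
def edgeSimplex (q : ℕ) : Set (Fin q → Fin q → ℝ) :=
  {h | (∀ σ σ', 0 ≤ h σ σ') ∧ (∀ σ σ', h σ σ' = h σ' σ) ∧ ∑ σ, ∑ σ', h σ σ' = 1}

/-- One-point marginal of an edge measure. -/
def marg (q : ℕ) (h : Fin q → Fin q → ℝ) : Fin q → ℝ := fun σ => ∑ σ', h σ σ'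

/-- Shannon entropy of a measure on `Fin q`. -/
def ent1 (q : ℕ) (p : Fin q → ℝ) : ℝ := -∑ σ, p σ * Real.log (p σ)

/-- Shannon entropy of a measure on `Fin q × Fin q`. -/
def ent2 (q : ℕ) (h : Fin q → Fin q → ℝ) : ℝ := -∑ σ, ∑ σ', h σ σ' * Real.log (h σ σ')

/-- The edge Bethe free energy functional `𝚽`. -/
def edgePhi (q d : ℕ) (ψ : Fin q → Fin q → ℝ) (ψb : Fin q → ℝ)
    (h : Fin q → Fin q → ℝ) : ℝ :=
  (∑ σ, marg q h σ * Real.log (ψb σ)) - ((d : ℝ) - 1) * ent1 q (marg q h) +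
    ((d : ℝ) / 2) * ((∑ σ, ∑ σ', h σ σ' * Real.log (ψ σ σ')) + ent2 q h)

/-- The embedding `g ↦ g ⊗_ψ g` of the simplex into the edge simplex. -/
def tensorPsi (q : ℕ) (ψ : Fin q → Fin q → ℝ) (g : Fin q → ℝ) : Fin q → Fin q → ℝ :=
  fun σ σ' => ψ σ σ' * g σ * g σ' / ∑ τ, ∑ τ', ψ τ τ' * g τ * g τ'

/-- All directional derivatives of `𝚽` within the edge simplex vanish at `h`. -/
def IsStationaryOn (q d : ℕ) (ψ : Fin q → Fin q → ℝ) (ψb : Fin q → ℝ)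
    (h : Fin q → Fin q → ℝ) : Prop :=
  ∀ h' ∈ edgeSimplex q,
    deriv (fun η : ℝ =>
      edgePhi q d ψ ψb fun σ σ' => h σ σ' + η * (h' σ σ' - h σ σ')) 0 = 0

/-! ## Matchings (configuration model) -/

/-- A perfect matching of `Fin N`, encoded as a fixed-point-free involution. -/
def IsMatching {N : ℕ} (m : Fin N → Fin N) : Prop :=
  Function.Involutive m ∧ ∀ i, m i ≠ i

instance {N : ℕ} : DecidablePred (IsMatching (N := N)) := fun m =>
  decidable_of_iff ((∀ i, m (m i) = i) ∧ ∀ i, m i ≠ i) Iff.rfl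

/-- The set `M_{d,n}` of perfect matchings (here of `Fin N`). -/
abbrev Matchings (N : ℕ) := {m : Fin N → Fin N // IsMatching m}

/-- Representative modulo `n` of a half-edge label. -/
def bar (d n : ℕ) (i : Fin (d * n)) : Fin n :=
  ⟨i.1 % n, Nat.mod_lt _ (Nat.pos_of_ne_zero fun h => by subst h; simpa using i.2)⟩

/-- Partition function of the factor model determined by a matching `γ ∈ M_{d,n}`. -/
def Zmatch (q d n : ℕ) (ψ : Fin q → Fin q → ℝ) (ψb : Fin q → ℝ)
    (γ : Matchings (d * n)) : ℝ :=
  ∑ σ : Fin n → Fin q,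
    (∏ v, ψb (σ v)) *
      ∏ i ∈ univ.filter fun i => i < γ.1 i, ψ (σ (bar d n i)) (σ (bar d n (γ.1 i)))

/-- Expectation under the uniform measure on matchings (configuration model). -/
def Ecm (d n : ℕ) (f : Matchings (d * n) → ℝ) : ℝ :=
  (∑ γ : Matchings (d * n), f γ) / (Fintype.card (Matchings (d * n)) : ℝ)

/-- The free energy `φ^cm_{d,n}` of the configuration model. -/
def phiCm (q d n : ℕ) (ψ : Fin q → Fin q → ℝ) (ψb : Fin q → ℝ) : ℝ :=
  (n : ℝ)⁻¹ * Ecm d n fun γ => Real.log (Zmatch q d n ψ ψb γ)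

/-- Probability of an event under the uniform measure on matchings. -/
def Pcm (d n : ℕ) (p : Matchings (d * n) → Prop) : ℝ :=
  (Nat.card {γ : Matchings (d * n) // p γ} : ℝ) / (Fintype.card (Matchings (d * n)) : ℝ)

/-! ## Multigraphs via adjacency counts, tree-like vertices, `ζ_t` -/

/-- Degree in a multigraph given by adjacency counts (a self-loop counts twice,
via the convention `A v v = 2 · #loops`). -/
def mgDeg {V : Type} [Fintype V] (A : V → V → ℕ) (u : V) : ℕ := ∑ w, A u w

/-- The simple graph underlying a multigraph (loops and multiplicities dropped). -/
def mgGraph {V : Type} (A : V → V → ℕ) : SimpleGraph V where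
  Adj u w := u ≠ w ∧ (A u w ≠ 0 ∨ A w u ≠ 0)
  symm := ⟨fun u w h => ⟨h.1.symm, h.2.symm⟩⟩
  loopless := ⟨fun u h => h.1 rfl⟩

/-- The radius-`t` ball around `v`. -/
def mball {V : Type} [Fintype V] (A : V → V → ℕ) (v : V) (t : ℕ) : Finset V := by
  classical exact univ.filter fun u => (mgGraph A).Reachable v u ∧ (mgGraph A).dist v u ≤ t

/-- `v` is `t`-tree-like: the radius-`t` ball around `v` is isomorphic to the depth-`t`
ball of the `d`-regular tree; concretely, every vertex at distance `< t` has degree `d`,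
the ball carries no self-loops or multi-edges, and the (connected) ball has exactly
`|ball| - 1` edges, i.e. contains no cycle. -/
def treeLike (d : ℕ) {V : Type} [Fintype V] (A : V → V → ℕ) (t : ℕ) (v : V) : Prop :=
  (∀ u, (mgGraph A).Reachable v u → (mgGraph A).dist v u < t → mgDeg A u = d) ∧
  (∀ u ∈ mball A v t, A u u = 0) ∧
  (∀ u ∈ mball A v t, ∀ w ∈ mball A v t, A u w ≤ 1) ∧
  (∑ u ∈ mball A v t, ∑ w ∈ mball A v t, A u w) = 2 * ((mball A v t).card - 1)

/-- Fraction `ζ_t` of vertices whose radius-`t` ball is not `d`-regular-tree-like. -/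
def zeta (d : ℕ) {V : Type} [Fintype V] (A : V → V → ℕ) (t : ℕ) : ℝ :=
  (Nat.card {v : V // ¬ treeLike d A t v} : ℝ) / (Fintype.card V : ℝ)

/-- Adjacency counts of the multigraph `G[γ]` determined by a matching. -/
def matchAdj {d n : ℕ} (γ : Matchings (d * n)) (u w : Fin n) : ℕ :=
  (univ.filter fun i : Fin (d * n) => bar d n i = u ∧ bar d n (γ.1 i) = w).card

/-- Adjacency counts of a simple graph. -/
def sgAdj {V : Type} [Fintype V] (G : SimpleGraph V) (u w : V) : ℕ := by
  classical exact if G.Adj u w then 1 else 0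

/-! ## Partition functions of graphs and multigraphs -/

/-- The Gibbs weight of a configuration on a simple graph. -/
def graphWeight (q : ℕ) {V : Type} [Fintype V] [LinearOrder V] (ψ : Fin q → Fin q → ℝ)
    (ψb : Fin q → ℝ) (G : SimpleGraph V) (σ : V → Fin q) : ℝ := by
  classical exact
    (∏ v, ψb (σ v)) *
      ∏ p ∈ univ.filter fun p : V × V => p.1 < p.2 ∧ G.Adj p.1 p.2, ψ (σ p.1) (σ p.2)

/-- Partition function of the factor model on a simple graph. -/
def ZG (q : ℕ) {V : Type} [Fintype V] [LinearOrder V] (ψ : Fin q → Fin q → ℝ)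
    (ψb : Fin q → ℝ) (G : SimpleGraph V) : ℝ :=
  ∑ σ : V → Fin q, graphWeight q ψ ψb G σ

/-- The Gibbs weight of a configuration on a multigraph. -/
def mgWeight (q : ℕ) {V : Type} [Fintype V] [LinearOrder V] (ψ : Fin q → Fin q → ℝ)
    (ψb : Fin q → ℝ) (A : V → V → ℕ) (σ : V → Fin q) : ℝ :=
  (∏ v, ψb (σ v)) *
    (∏ p ∈ univ.filter fun p : V × V => p.1 < p.2, ψ (σ p.1) (σ p.2) ^ A p.1 p.2) *
    ∏ v, ψ (σ v) (σ v) ^ (A v v / 2)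

/-- Partition function of the factor model on a multigraph. -/
def Zmg (q : ℕ) {V : Type} [Fintype V] [LinearOrder V] (ψ : Fin q → Fin q → ℝ)
    (ψb : Fin q → ℝ) (A : V → V → ℕ) : ℝ :=
  ∑ σ : V → Fin q, mgWeight q ψ ψb A σ

/-- Remove a vertex from a multigraph (delete all incident edges). -/
def removeVx {V : Type} [DecidableEq V] (A : V → V → ℕ) (v : V) : V → V → ℕ :=
  fun i j => if i = v ∨ j = v then 0 else A i j

/-- Law of the spins of the (enumerated) neighbors of `v` under the factor model
on the multigraph with `v` removed. -/
def nuMinus (q d N : ℕ) (ψ : Fin q → Fin q → ℝ) (ψb : Fin q → ℝ)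
    (A : Fin N → Fin N → ℕ) (v : Fin N) (vs : Fin d → Fin N) (τ : Fin d → Fin q) : ℝ :=
  (∑ᶠ (σ : Fin N → Fin q) (_ : ∀ j, σ (vs j) = τ j), mgWeight q ψ ψb (removeVx A v) σ) /
    Zmg q ψ ψb (removeVx A v)

/-- Total variation distance of probability vectors. -/
def dTV {α : Type} [Fintype α] (p r : α → ℝ) : ℝ := (∑ x, |p x - r x|) / 2

/-- The mixture `ρ̄` of product measures associated to a measure `ρ` on `Δ^d`. -/
def rhoBar (q d : ℕ) (ρ : Measure (Fin d → Fin q → ℝ)) (τ : Fin d → Fin q) : ℝ :=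
  ∫ h, (∏ j, h j (τ j)) ∂ρ

/-- `x` lies in the (topological) support of the measure `ρ`. -/
def inSupp {α : Type*} [TopologicalSpace α] {m : MeasurableSpace α}
    (ρ : Measure α) (x : α) : Prop :=
  ∀ U : Set α, IsOpen U → x ∈ U → 0 < ρ U

/-- Symmetric multigraph adjacency data with an even number of half-loops. -/
def IsMultigraphAdj {V : Type} (A : V → V → ℕ) : Prop :=
  (∀ u w, A u w = A w u) ∧ ∀ v, Even (A v v)

/-- `d`-regularity of a multigraph. -/
def IsRegAdj (d : ℕ) {V : Type} [Fintype V] (A : V → V → ℕ) : Prop :=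
  ∀ v, mgDeg A v = d

/-! ## The functionals `Ψ^vx`, `Ψ^e`, `Ψ^{e,sym}`, `Ψ^sym` -/

def PsiVx (q d : ℕ) (ψ : Fin q → Fin q → ℝ) (ψb : Fin q → ℝ)
    (h : Fin d → Fin q → ℝ) : ℝ :=
  ∑ σ, ψb σ * ∏ j, ∑ σ', ψ σ σ' * h j σ'

def PsiE (q d : ℕ) (ψ : Fin q → Fin q → ℝ) (h : Fin d → Fin q → ℝ) : ℝ :=
  ∏ j : Fin (d / 2),
    ∑ σ, ∑ σ', ψ σ σ' * h ⟨2 * j.1, by have := j.2; omega⟩ σ *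
      h ⟨2 * j.1 + 1, by have := j.2; omega⟩ σ'

def PsiEsym (q d : ℕ) (ψ : Fin q → Fin q → ℝ) (h : Fin d → Fin q → ℝ) : ℝ :=
  (∑ π : Equiv.Perm (Fin d), PsiE q d ψ fun j => h (π j)) / (Nat.factorial d : ℝ)

def PsiSym (q d : ℕ) (ψ : Fin q → Fin q → ℝ) (ψb : Fin q → ℝ)
    (h : Fin d → Fin q → ℝ) : ℝ :=
  PsiVx q d ψ ψb h / PsiEsym q d ψ h

/-! ## Potts model -/

/-- Potts pair interaction. -/
def pottsPsi (q : ℕ) (β : ℝ) : Fin q → Fin q → ℝ :=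
  fun σ σ' => Real.exp (if σ = σ' then β else 0)

/-- Potts magnetic field (favoring the spin with index `0`). -/
def pottsPsib (q : ℕ) (B : ℝ) : Fin q → ℝ :=
  fun σ => Real.exp (if σ.1 = 0 then B else 0)

/-- The one-parameter family `h_b ∈ Δ̄` of biased measures. -/
def pottsHb (q : ℕ) (b : ℝ) : Fin q → ℝ :=
  fun σ => if σ.1 = 0 then (1 + ((q : ℝ) - 1) * b) / q else (1 - b) / q

/-- The univariate Bethe recursion `bp` on the bias parameter `b`. -/
def pottsBp (q d : ℕ) (β B : ℝ) (b : ℝ) : ℝ :=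
  ((q : ℝ) * (∑ σ ∈ univ.filter fun σ : Fin q => σ.1 = 0,
      BPmap q d (pottsPsi q β) (pottsPsib q B) (pottsHb q b) σ) - 1) / ((q : ℝ) - 1)

/-- `b_f`, the limit of the (monotone) BP iterates started from `b = 0`. -/
def bLo (q d : ℕ) (β B : ℝ) : ℝ := ⨆ t : ℕ, (pottsBp q d β B)^[t] 0

/-- `b_m`, the limit of the (monotone) BP iterates started from `b = 1`. -/
def bHi (q d : ℕ) (β B : ℝ) : ℝ := ⨅ t : ℕ, (pottsBp q d β B)^[t] 1

/-- The function `F(x) = x⁻¹ (x/θ + 1)^{d-1}`. -/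
def Fpotts (d : ℕ) (θ x : ℝ) : ℝ := x⁻¹ * (x / θ + 1) ^ (d - 1)

/-! ## Exchangeable pairs and the symmetric correlation coefficient -/

def eMean (q : ℕ) (h φ : Fin q → Fin q → ℝ) : ℝ := ∑ σ, ∑ σ', h σ σ' * φ σ σ'

def eVar (q : ℕ) (h φ : Fin q → Fin q → ℝ) : ℝ :=
  ∑ σ, ∑ σ', h σ σ' * (φ σ σ' - eMean q h φ) ^ 2

def eCondVar (q : ℕ) (h φ : Fin q → Fin q → ℝ) : ℝ :=
  ∑ σ, marg q h σ * ((∑ σ', h σ σ' * φ σ σ') / marg q h σ - eMean q h φ) ^ 2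

/-- The symmetric correlation coefficient `ρ_XY` of an exchangeable pair with law `h`. -/
def rhoXY (q : ℕ) (h : Fin q → Fin q → ℝ) : ℝ :=
  sSup {r | ∃ φ : Fin q → Fin q → ℝ, (∀ σ σ', φ σ σ' = φ σ' σ) ∧ 0 < eVar q h φ ∧
    r = eCondVar q h φ / eVar q h φ}

/-! ## Empirical measures, misc -/

/-- The edge empirical measure `L^e(σ, γ)`. -/
def edgeEmp (q d n : ℕ) (γ : Matchings (d * n)) (σ : Fin n → Fin q) :
    Fin q → Fin q → ℝ :=
  fun τ τ' =>
    ((univ.filter fun i : Fin (d * n) =>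
        σ (bar d n i) = τ ∧ σ (bar d n (γ.1 i)) = τ').card : ℝ) / ((n : ℝ) * d)

/-- The vertex empirical (spin) distribution `L^vx(σ)`. -/
def empDist (q n : ℕ) (σ : Fin n → Fin q) : Fin q → ℝ :=
  fun τ => (Nat.card {i : Fin n // σ i = τ} : ℝ) / n

/-- Probability of an event under a weight function. -/
def probOf {α : Type*} (P : α → ℝ) (p : α → Prop) : ℝ := ∑ᶠ (x : α) (_ : p x), P x

/-- Probability of an event under the uniform measure on simple `d`-regular graphs. -/
def Preg (d n : ℕ) (p : SimpleGraph (Fin n) → Prop) : ℝ :=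
  (Nat.card {G : SimpleGraph (Fin n) // (∀ v, mgDeg (sgAdj G) v = d) ∧ p G} : ℝ) /
    (Nat.card {G : SimpleGraph (Fin n) // ∀ v, mgDeg (sgAdj G) v = d} : ℝ)

/-- Adjoin to `G` one new vertex, adjacent to the vertices of `S`. -/
def addVertex (k : ℕ) (G : SimpleGraph (Fin k)) (S : Finset (Fin k)) :
    SimpleGraph (Fin (k + 1)) :=
  SimpleGraph.fromRel fun a b =>
    (∃ u w : Fin k, a = u.castSucc ∧ b = w.castSucc ∧ G.Adj u w) ∨
      (a = Fin.last k ∧ ∃ w ∈ S, b = w.castSucc)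

/-- Strict local maximizer of the edge Bethe functional on the edge simplex. -/
def strictLocalMaxOnEdge (q d : ℕ) (ψ : Fin q → Fin q → ℝ) (ψb : Fin q → ℝ)
    (H : Fin q → Fin q → ℝ) : Prop :=
  ∃ ε : ℝ, 0 < ε ∧ ∀ h' ∈ edgeSimplex q, h' ≠ H → dist h' H < ε →
    edgePhi q d ψ ψb h' < edgePhi q d ψ ψb H

/-- Strictly negative second variation of the edge Bethe functional at `H`, in every
nonzero symmetric direction of total mass zero. -/
def negSecondVar (q d : ℕ) (ψ : Fin q → Fin q → ℝ) (ψb : Fin q → ℝ)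
    (H : Fin q → Fin q → ℝ) : Prop :=
  ∀ δ : Fin q → Fin q → ℝ, δ ≠ 0 → (∀ σ σ', δ σ σ' = δ σ' σ) →
    (∑ σ, ∑ σ', δ σ σ') = 0 →
    iteratedDeriv 2 (fun η : ℝ => edgePhi q d ψ ψb fun σ σ' => H σ σ' + η * δ σ σ') 0 < 0

/-!
At a fixed point `h`, with `Z` the normaliser of the recursion, `h σ · Z = ψ̄(σ) (h σ / θ + 1)^(d-1)`,
so `h σ > 0` and `ψ̄(σ) F(h σ) = Z`. Hence every coordinate other than the one favoured by the
field lies on a single level set of `F`, and that level set meets each of the monotonicity intervals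
`(0, v]` and `[v, ∞)` of `F` in at most one point. Sorting the coordinates according to the side of
`v` on which they fall produces `π` and `ℓ`.
-/

section Monotonicity

variable {d : ℕ} {θ : ℝ}

theorem Fpotts_hasDerivAt {x : ℝ} (hd : 2 ≤ d) (hθ : θ ≠ 0) (hx : x ≠ 0) :
    HasDerivAt (Fpotts d θ)
      ((x / θ + 1) ^ (d - 2) / (θ * x ^ 2) * (((d : ℝ) - 2) * x - θ)) x := by
  refine ((hasDerivAt_inv hx).mul
    ((((hasDerivAt_id x).div_const θ).add_const 1).pow (d - 1))).congr_deriv ?_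
  obtain ⟨k, rfl⟩ : ∃ k, d = k + 2 := ⟨d - 2, by omega⟩
  rw [show k + 2 - 1 = k + 1 by omega, show k + 2 - 2 = k by omega, Nat.add_sub_cancel]
  simp only [id, Pi.pow_apply, pow_succ]
  push_cast
  field_simp
  ring

theorem Fpotts_continuousOn (hd : 2 ≤ d) (hθ : θ ≠ 0) :
    ContinuousOn (Fpotts d θ) (Set.Ioi 0) := fun _ hx =>
  (Fpotts_hasDerivAt hd hθ (ne_of_gt hx)).continuousAt.continuousWithinAt

theorem Fpotts_strictAntiOn (hd : 3 ≤ d) (hθ : 0 < θ) :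
    StrictAntiOn (Fpotts d θ) (Set.Ioc 0 (θ / ((d : ℝ) - 2))) := by
  have hd2 : (0 : ℝ) < (d : ℝ) - 2 := by
    have : (3 : ℝ) ≤ d := by exact_mod_cast hd
    linarith
  refine strictAntiOn_of_deriv_neg (convex_Ioc _ _)
    ((Fpotts_continuousOn (by omega) hθ.ne').mono Set.Ioc_subset_Ioi_self) fun x hx => ?_
  rw [interior_Ioc] at hx
  obtain ⟨hx0, hxv⟩ := hx
  rw [(Fpotts_hasDerivAt (by omega) hθ.ne' hx0.ne').deriv]
  have hsign : ((d : ℝ) - 2) * x - θ < 0 := by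
    rw [lt_div_iff₀ hd2] at hxv
    linarith
  exact mul_neg_of_pos_of_neg (by positivity) hsign

theorem Fpotts_strictMonoOn (hd : 3 ≤ d) (hθ : 0 < θ) :
    StrictMonoOn (Fpotts d θ) (Set.Ici (θ / ((d : ℝ) - 2))) := by
  have hd2 : (0 : ℝ) < (d : ℝ) - 2 := by
    have : (3 : ℝ) ≤ d := by exact_mod_cast hd
    linarith
  have hv : 0 < θ / ((d : ℝ) - 2) := by positivity
  refine strictMonoOn_of_deriv_pos (convex_Ici _)
    ((Fpotts_continuousOn (by omega) hθ.ne').mono fun x hx => hv.trans_le hx) fun x hx => ?_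
  rw [interior_Ici] at hx
  have hx0 : 0 < x := hv.trans hx
  rw [(Fpotts_hasDerivAt (by omega) hθ.ne' hx0.ne').deriv]
  have hsign : 0 < ((d : ℝ) - 2) * x - θ := by
    rw [Set.mem_Ioi, div_lt_iff₀ hd2] at hx
    linarith
  exact mul_pos (by positivity) hsign

end Monotonicity

theorem exists_eq_or_eq_of_injOn_union {α β ι : Type*} [Nonempty α] {f : α → β}
    {s t : Set α} (hs : s.InjOn f) (ht : t.InjOn f) {g : ι → α} (hg : ∀ i, g i ∈ s ∪ t)
    {c : β} (hc : ∀ i, f (g i) = c) : ∃ y w, ∀ i, g i = y ∨ g i = w := by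
  classical
  refine ⟨if h : ∃ i, g i ∈ s then g h.choose else Classical.arbitrary α,
    if h : ∃ i, g i ∈ t then g h.choose else Classical.arbitrary α, fun j => ?_⟩
  rcases hg j with hj | hj
  · have h : ∃ i, g i ∈ s := ⟨j, hj⟩
    exact Or.inl <| by rw [dif_pos h]; exact hs hj h.choose_spec ((hc j).trans (hc _).symm)
  · have h : ∃ i, g i ∈ t := ⟨j, hj⟩
    exact Or.inr <| by rw [dif_pos h]; exact ht hj h.choose_spec ((hc j).trans (hc _).symm)

theorem val_apply_ne_zero_of_apply_zero {q : ℕ} {hq : 0 < q} {π : Equiv.Perm (Fin q)}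
    (hπ0 : π ⟨0, hq⟩ = ⟨0, hq⟩) {σ : Fin q} (hσ : σ.1 ≠ 0) : (π σ).1 ≠ 0 := fun h0 =>
  hσ (congrArg Fin.val (π.injective (Fin.ext (h0.trans (congrArg Fin.val hπ0).symm))))

theorem exists_perm_fixing_zero_of_pred {q : ℕ} (hq : 0 < q) (p : Fin q → Prop)
    [DecidablePred p] :
    ∃ ℓ : ℕ, 1 ≤ ℓ ∧ ℓ ≤ q ∧ ∃ π : Equiv.Perm (Fin q), π ⟨0, hq⟩ = ⟨0, hq⟩ ∧
      ∀ σ : Fin q, σ.1 ≠ 0 → (p (π σ) ↔ σ.1 < ℓ) := by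
  set key : Fin q → ℕ := fun σ => if σ.1 = 0 then 0 else if p σ then 1 else 2
  set π := Tuple.sort key
  have hmono : Monotone (key ∘ π) := Tuple.monotone_sort key
  set ℓ := #{i | (key ∘ π) i ≤ 1}
  have hlt (j : Fin q) : j.1 < ℓ ↔ key (π j) ≤ 1 :=
    Tuple.lt_card_le_iff_apply_le_of_monotone hmono
  have hπ0 : π ⟨0, hq⟩ = ⟨0, hq⟩ := by
    have hle : key (π ⟨0, hq⟩) ≤ key (π (π.symm ⟨0, hq⟩)) :=
      hmono (show (⟨0, hq⟩ : Fin q) ≤ _ from Nat.zero_le _)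
    simp only [Equiv.apply_symm_apply, key, if_pos rfl] at hle
    ext
    by_contra hne
    simp only [if_neg hne] at hle
    split_ifs at hle <;> omega
  refine ⟨ℓ, ?_, card_le_univ _ |>.trans_eq (Fintype.card_fin q), π, hπ0, fun σ hσ => ?_⟩
  · exact (hlt ⟨0, hq⟩).mpr (by simp [hπ0, key])
  · rw [hlt]
    simp only [key, if_neg (val_apply_ne_zero_of_apply_zero hπ0 hσ)]
    split_ifs <;> simp_all

theorem pottsPsi_mulVec {q : ℕ} (β : ℝ) {h : Fin q → ℝ} (hsum : ∑ σ, h σ = 1) (σ : Fin q) :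
    ∑ σ', pottsPsi q β σ σ' * h σ' = (Real.exp β - 1) * h σ + 1 := by
  have hterm σ' : pottsPsi q β σ σ' * h σ' =
      h σ' + if σ = σ' then (Real.exp β - 1) * h σ' else 0 := by
    unfold pottsPsi
    split_ifs
    · ring
    · simp
  rw [Finset.sum_congr rfl fun σ' _ => hterm σ', Finset.sum_add_distrib, hsum,
    Finset.sum_ite_eq]
  simp [add_comm]

theorem mul_normalizer_of_mem_bpFixedPts {q d : ℕ} {ψ : Fin q → Fin q → ℝ} {ψb : Fin q → ℝ}
    {h : Fin q → ℝ} (hh : h ∈ bpFixedPts q d ψ ψb) (σ : Fin q) :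
    h σ * ∑ τ, ψb τ * (∑ σ', ψ τ σ' * h σ') ^ (d - 1) =
      ψb σ * (∑ σ', ψ σ σ' * h σ') ^ (d - 1) := by
  obtain ⟨⟨-, hsum⟩, hfix⟩ := hh
  have hZ : ∑ τ, ψb τ * (∑ σ', ψ τ σ' * h σ') ^ (d - 1) ≠ 0 := by
    intro hZ
    have : h = 0 := by rw [← hfix]; ext; simp [BPmap, hZ]
    simp [this] at hsum
  rw [← eq_div_iff hZ]
  exact (congrFun hfix σ).symm

theorem pottsPsib_mul_Fpotts_of_mem_bpFixedPts {q d : ℕ} {β B : ℝ} (hβ : 0 < β)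
    {h : Fin q → ℝ} (hh : h ∈ bpFixedPts q d (pottsPsi q β) (pottsPsib q B)) :
    (∀ σ, 0 < h σ) ∧
      ∃ z > 0, ∀ σ, pottsPsib q B σ * Fpotts d (1 / (Real.exp β - 1)) (h σ) = z := by
  have ha : 0 < Real.exp β - 1 := by linarith [Real.add_one_lt_exp hβ.ne']
  obtain ⟨hnonneg, hsum⟩ := hh.1
  have hmul x : x / (1 / (Real.exp β - 1)) + 1 = (Real.exp β - 1) * x + 1 := by field_simp
  set Z := ∑ τ, pottsPsib q B τ * ((Real.exp β - 1) * h τ + 1) ^ (d - 1)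
  have hterm σ : 0 < pottsPsib q B σ * ((Real.exp β - 1) * h σ + 1) ^ (d - 1) := by
    have := hnonneg σ
    unfold pottsPsib
    positivity
  have hfix σ : h σ * Z = pottsPsib q B σ * ((Real.exp β - 1) * h σ + 1) ^ (d - 1) := by
    simpa only [pottsPsi_mulVec β hsum] using mul_normalizer_of_mem_bpFixedPts hh σ
  have hZ : 0 < Z :=
    sum_pos (fun σ _ => hterm σ) (nonempty_of_sum_ne_zero (hsum ▸ one_ne_zero))
  have hpos σ : 0 < h σ := (pos_iff_pos_of_mul_pos (hfix σ ▸ hterm σ)).mpr hZ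
  refine ⟨hpos, Z, hZ, fun σ => ?_⟩
  rw [Fpotts, hmul, mul_left_comm, ← hfix σ, inv_mul_cancel_left₀ (hpos σ).ne']

/-- classification of Potts BP fixed points: up to a permutation (fixing
spin `1` when `m > 1`), the coordinates satisfy `m F(h_{π(1)}) = z`, `F(h_{π(σ)}) = z` for
`σ ≠ 1`, with the coordinates `2 ≤ σ ≤ ℓ` at least `v` and the rest at most `v`; in
particular a fixed point takes at most three distinct values. -/
theorem potts_fixed_point_classification
    (q d : ℕ) (hq : 2 ≤ q) (hd : 3 ≤ d) (β B : ℝ) (hβ : 0 < β) :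
    ∀ h ∈ bpFixedPts q d (pottsPsi q β) (pottsPsib q B),
      (∃ ℓ : ℕ, 1 ≤ ℓ ∧ ℓ ≤ q ∧ ∃ π : Equiv.Perm (Fin q), ∃ z : ℝ, 0 < z ∧
        (0 < B → π ⟨0, by omega⟩ = ⟨0, by omega⟩) ∧
        Real.exp B * Fpotts d (1 / (Real.exp β - 1)) (h (π ⟨0, by omega⟩)) = z ∧
        (∀ σ : Fin q, σ.1 ≠ 0 → Fpotts d (1 / (Real.exp β - 1)) (h (π σ)) = z) ∧
        (∀ σ : Fin q, 1 ≤ σ.1 → σ.1 ≤ ℓ - 1 →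
          (1 / (Real.exp β - 1)) / ((d : ℝ) - 2) ≤ h (π σ)) ∧
        (∀ σ : Fin q, ℓ ≤ σ.1 →
          h (π σ) ≤ (1 / (Real.exp β - 1)) / ((d : ℝ) - 2))) ∧
      ∃ x y w : ℝ, ∀ σ, h σ = x ∨ h σ = y ∨ h σ = w := by
  intro h hh
  set θ := 1 / (Real.exp β - 1)
  have hθ : 0 < θ := one_div_pos.mpr (by linarith [Real.add_one_lt_exp hβ.ne'])
  set v := θ / ((d : ℝ) - 2)
  obtain ⟨hpos, z, hz, hFz⟩ := pottsPsib_mul_Fpotts_of_mem_bpFixedPts hβ hh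
  have hF σ (hσ : σ.1 ≠ 0) : Fpotts d θ (h σ) = z := by
    simpa only [pottsPsib, if_neg hσ, Real.exp_zero, one_mul] using hFz σ
  obtain ⟨ℓ, hℓ1, hℓq, π, hπ0, hπ⟩ :=
    exists_perm_fixing_zero_of_pred (by omega) fun σ => v ≤ h σ
  obtain ⟨y, w, hyw⟩ := exists_eq_or_eq_of_injOn_union (Fpotts_strictAntiOn hd hθ).injOn
    (Fpotts_strictMonoOn hd hθ).injOn (g := fun σ : {σ : Fin q // σ.1 ≠ 0} => h σ)
    (fun σ => (le_total (h σ) v).imp (fun hle => ⟨hpos σ, hle⟩) id) fun σ => hF σ σ.2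
  refine ⟨⟨ℓ, hℓ1, hℓq, π, z, hz, fun _ => hπ0, by
    simpa only [hπ0, pottsPsib, if_true] using hFz ⟨0, by omega⟩,
    fun σ hσ => hF _ (val_apply_ne_zero_of_apply_zero hπ0 hσ), fun σ hσ1 hσℓ => (hπ σ (by omega)).mpr (by omega),
    fun σ hσ => le_of_not_ge ((hπ σ (by omega)).not.mpr (by omega))⟩,
    h ⟨0, by omega⟩, y, w, fun σ => ?_⟩
  by_cases hσ : σ.1 = 0
  · exact Or.inl (congrArg h (Fin.ext hσ))
  · exact Or.inr (hyw ⟨σ, hσ⟩)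

end
end

section
/- For the q-state Potts model with q ≥ 2, d ≥ 3, m = e^B ≥ 1 and θ = 1/(e^β − 1) > 0: let h ∈ Δ* be a BP fixed point for which there exist two distinct spins σ1 ≠ σ2 with h_{σ1} = h_{σ2} > v. Then the corresponding point h ⊗_ψ h ∈ Δ_e is not a local maximizer of the edge Bethe functional 𝚽. In particular, ℓ_±-type solutions with ℓ > 2 whose value p_+ strictly exceeds v are never local maximizers of 𝚽. -/
open Finset Filter MeasureTheory

noncomputable section

/-!
Put `K = h ⊗_ψ h`, `b = e^β - 1`, `e = 𝟙_{σ1} - 𝟙_{σ2}`, and move along the line `K + tΔ` with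
`Δ(σ, σ') = ψ(σ, σ') (e_σ h_σ' + h_σ e_σ')`, the derivative of the unnormalised `ψ(σ, σ') g_σ g_σ'`
at `g = h` in the direction `e`. `Δ` is symmetric, and because `h_{σ1} = h_{σ2}` it has total mass
zero, so the line stays in the edge simplex for small `|t|`.

At a BP fixed point the coefficient of `Δ̄_σ` in the first variation of `𝚽` does not depend on `σ`,
so the first derivative along any such line vanishes. For the Potts model with `Σ e = 0`, the
second derivative at `t = 0` is
`z Σ_σ e_σ² (1 + 2 b h_σ) (b h_σ (d - 2) - 1) / (h_σ (1 + b h_σ))` with `z = Σ ψ(σ, σ') h_σ h_σ'`,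
which is positive when `h_σ > v = 1 / (b (d - 2))` on the support of `e`. So `t = 0` is a strict
local minimum of `𝚽` along the line, and `K` is not a local maximiser.
-/

open Real Set Topology

theorem not_isLocalMax_of_deriv_deriv_pos {f : ℝ → ℝ} {x₀ : ℝ} (hf : 0 < deriv (deriv f) x₀)
    (hd : deriv f x₀ = 0) (hc : ContinuousAt f x₀) : ¬ IsLocalMax f x₀ := by
  intro hmax
  obtain ⟨ε, hε, hsign⟩ :=
    Metric.eventually_nhds_iff.1 (eventually_nhdsWithin_sign_eq_of_deriv_pos hf hd)
  have hderiv : ∀ x ∈ Ioo x₀ (x₀ + ε), 0 < deriv f x := fun x hx => by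
    have hx' := hsign (show dist x x₀ < ε by
      rw [Real.dist_eq, abs_lt]; constructor <;> linarith [hx.1, hx.2])
    rwa [sign_pos (sub_pos.2 hx.1), sign_eq_one_iff] at hx'
  have hmono : StrictMonoOn f (Icc x₀ (x₀ + ε / 2)) := by
    refine strictMonoOn_of_deriv_pos (convex_Icc _ _) (fun x hx => ?_) (fun x hx => ?_)
    · rcases hx.1.eq_or_lt with rfl | hlt
      · exact hc.continuousWithinAt
      · exact (differentiableAt_of_deriv_ne_zero
          (hderiv x ⟨hlt, by linarith [hx.2]⟩).ne').continuousAt.continuousWithinAt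
    · rw [interior_Icc] at hx
      exact hderiv x ⟨hx.1, by linarith [hx.2]⟩
  obtain ⟨x, hle, hx⟩ := ((hmax.filter_mono nhdsWithin_le_nhds).and
    (Ioo_mem_nhdsGT (show x₀ < x₀ + ε / 2 by linarith))).exists (f := 𝓝[>] x₀)
  exact (hmono ⟨le_rfl, by linarith⟩ ⟨hx.1.le, hx.2.le⟩ hx.1).not_ge hle

theorem IsLocalMaxOn.isLocalMax_comp_line {E : Type*} [AddCommGroup E] [Module ℝ E]
    [TopologicalSpace E] [ContinuousAdd E] [ContinuousSMul ℝ E] {f : E → ℝ} {s : Set E}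
    {x v : E} (hf : IsLocalMaxOn f s x) (hs : ∀ᶠ t : ℝ in 𝓝 0, x + t • v ∈ s) :
    IsLocalMax (fun t : ℝ => f (x + t • v)) 0 := by
  have hγ : Tendsto (fun t : ℝ => x + t • v) (𝓝 0) (𝓝[s] x) := by
    refine tendsto_nhdsWithin_iff.2 ⟨?_, hs⟩
    have hcont : Continuous fun t : ℝ => x + t • v := by fun_prop
    simpa using hcont.tendsto 0
  have hf' : IsMaxFilter f (𝓝[s] x) (x + (0 : ℝ) • v) := by
    rw [zero_smul, add_zero]
    exact hf
  exact IsMaxFilter.comp_tendsto (g := fun t : ℝ => x + t • v) (b := 0) hf' hγ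

theorem hasDerivAt_sum_negMulLog_line {ι : Type*} [Fintype ι] {a c : ι → ℝ} {t : ℝ}
    (ht : ∀ i, 0 < a i + t * c i) :
    HasDerivAt (fun s => ∑ i, negMulLog (a i + s * c i))
      (-∑ i, (log (a i + t * c i) + 1) * c i) t := by
  rw [← Finset.sum_neg_distrib]
  refine HasDerivAt.fun_sum fun i _ => ?_
  refine ((hasDerivAt_negMulLog (ht i).ne').comp t
    ((hasDerivAt_mul_const (c i)).const_add (a i))).congr_deriv ?_
  ring

theorem hasDerivAt_sum_log_line {ι : Type*} [Fintype ι] {a c : ι → ℝ} (ha : ∀ i, 0 < a i) :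
    HasDerivAt (fun s => ∑ i, (log (a i + s * c i) + 1) * c i) (∑ i, c i ^ 2 / a i) 0 := by
  refine HasDerivAt.fun_sum fun i _ => ?_
  have hlog := ((Real.hasDerivAt_log (by simpa using (ha i).ne')).comp (0 : ℝ)
    ((hasDerivAt_mul_const (c i)).const_add (a i))).add_const 1
  refine (hlog.mul_const (c i)).congr_deriv ?_
  have := (ha i).ne'
  simp only [zero_mul, add_zero]
  field_simp

section EdgeLine

variable {q : ℕ}

theorem ent1_eq_sum_negMulLog (p : Fin q → ℝ) : ent1 q p = ∑ σ, negMulLog (p σ) := by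
  simp [ent1, negMulLog]

theorem ent2_eq_sum_negMulLog (h : Fin q → Fin q → ℝ) :
    ent2 q h = ∑ x : Fin q × Fin q, negMulLog (h x.1 x.2) := by
  rw [Fintype.sum_prod_type' fun σ σ' => negMulLog (h σ σ')]
  simp [ent2, negMulLog]

theorem marg_line (H Δ : Fin q → Fin q → ℝ) (t : ℝ) (σ : Fin q) :
    marg q (fun σ σ' => H σ σ' + t * Δ σ σ') σ = marg q H σ + t * marg q Δ σ := by
  simp [marg, Finset.sum_add_distrib, Finset.mul_sum]

theorem marg_pos {H : Fin q → Fin q → ℝ} (hH : ∀ σ σ', 0 < H σ σ') (σ : Fin q) :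
    0 < marg q H σ :=
  Finset.sum_pos (fun σ' _ => hH σ σ') ⟨σ, Finset.mem_univ σ⟩

theorem sum_sum_add_mul_of_symm {Δ : Fin q → Fin q → ℝ} (hΔ : ∀ σ σ', Δ σ σ' = Δ σ' σ)
    (f : Fin q → ℝ) : ∑ σ, ∑ σ', (f σ + f σ') * Δ σ σ' = 2 * ∑ σ, f σ * marg q Δ σ := by
  have hswap : ∑ σ, ∑ σ', f σ' * Δ σ σ' = ∑ σ, ∑ σ', f σ * Δ σ σ' := by
    rw [Finset.sum_comm]
    exact Finset.sum_congr rfl fun σ _ => Finset.sum_congr rfl fun σ' _ => by rw [hΔ]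
  simp only [add_mul, Finset.sum_add_distrib, hswap, ← two_mul]
  simp only [marg, Finset.mul_sum]

variable (q) (d : ℕ) (ψ : Fin q → Fin q → ℝ) (ψb : Fin q → ℝ) (H Δ : Fin q → Fin q → ℝ)

def edgePhiLineDeriv (t : ℝ) : ℝ :=
  ∑ σ, marg q Δ σ * log (ψb σ) + (d / 2 : ℝ) * ∑ σ, ∑ σ', Δ σ σ' * log (ψ σ σ') +
    ((d : ℝ) - 1) * ∑ σ, (log (marg q H σ + t * marg q Δ σ) + 1) * marg q Δ σ -
    (d / 2 : ℝ) * ∑ σ, ∑ σ', (log (H σ σ' + t * Δ σ σ') + 1) * Δ σ σ'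

variable {q d ψ ψb H Δ}

theorem hasDerivAt_edgePhi_line {t : ℝ} (ht : ∀ σ σ', 0 < H σ σ' + t * Δ σ σ') :
    HasDerivAt (fun s => edgePhi q d ψ ψb fun σ σ' => H σ σ' + s * Δ σ σ')
      (edgePhiLineDeriv q d ψ ψb H Δ t) t := by
  have hmarg : ∀ σ, 0 < marg q H σ + t * marg q Δ σ := fun σ => by
    simpa only [marg_line] using marg_pos ht σ
  have hE1 := hasDerivAt_sum_negMulLog_line hmarg
  have hE2 := hasDerivAt_sum_negMulLog_line (a := fun x : Fin q × Fin q => H x.1 x.2)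
    (c := fun x => Δ x.1 x.2) fun x => ht x.1 x.2
  have hL1 : HasDerivAt (fun s => ∑ σ, (marg q H σ + s * marg q Δ σ) * log (ψb σ))
      (∑ σ, marg q Δ σ * log (ψb σ)) t :=
    HasDerivAt.fun_sum fun σ _ => ((hasDerivAt_mul_const _).const_add _).mul_const _
  have hL2 : HasDerivAt (fun s => ∑ σ, ∑ σ', (H σ σ' + s * Δ σ σ') * log (ψ σ σ'))
      (∑ σ, ∑ σ', Δ σ σ' * log (ψ σ σ')) t :=
    HasDerivAt.fun_sum fun σ _ => HasDerivAt.fun_sum fun σ' _ =>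
      ((hasDerivAt_mul_const _).const_add _).mul_const _
  have hsum := ((hL1.add (hL2.const_mul (d / 2 : ℝ))).sub (hE1.const_mul ((d : ℝ) - 1))).add
    (hE2.const_mul (d / 2 : ℝ))
  refine (hsum.congr_deriv ?_).congr_of_eventuallyEq (Eventually.of_forall fun s => ?_)
  · rw [Fintype.sum_prod_type' fun σ σ' => (log (H σ σ' + t * Δ σ σ') + 1) * Δ σ σ']
    simp only [edgePhiLineDeriv]
    ring
  · simp only [edgePhi, ent1_eq_sum_negMulLog, ent2_eq_sum_negMulLog, marg_line, Pi.add_apply,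
      Pi.sub_apply]
    ring

theorem hasDerivAt_edgePhiLineDeriv (hH : ∀ σ σ', 0 < H σ σ') :
    HasDerivAt (edgePhiLineDeriv q d ψ ψb H Δ)
      (((d : ℝ) - 1) * ∑ σ, marg q Δ σ ^ 2 / marg q H σ -
        (d / 2 : ℝ) * ∑ σ, ∑ σ', Δ σ σ' ^ 2 / H σ σ') 0 := by
  have h1 := hasDerivAt_sum_log_line (c := marg q Δ) (marg_pos hH)
  have h2 := hasDerivAt_sum_log_line (a := fun x : Fin q × Fin q => H x.1 x.2)
    (c := fun x => Δ x.1 x.2) fun x => hH x.1 x.2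
  rw [← Fintype.sum_prod_type' fun σ σ' => Δ σ σ' ^ 2 / H σ σ']
  have hsum := ((h1.const_mul ((d : ℝ) - 1)).sub (h2.const_mul (d / 2 : ℝ))).const_add
    (∑ σ, marg q Δ σ * log (ψb σ) + (d / 2 : ℝ) * ∑ σ, ∑ σ', Δ σ σ' * log (ψ σ σ'))
  refine (hsum.congr_deriv (by ring)).congr_of_eventuallyEq (Eventually.of_forall fun t => ?_)
  simp only [edgePhiLineDeriv, Pi.sub_apply]
  rw [Fintype.sum_prod_type' fun σ σ' => (log (H σ σ' + t * Δ σ σ') + 1) * Δ σ σ']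
  ring

theorem eventually_pos_line (hH : ∀ σ σ', 0 < H σ σ') :
    ∀ᶠ t in 𝓝 0, ∀ σ σ', 0 < H σ σ' + t * Δ σ σ' := by
  refine eventually_all.2 fun σ => eventually_all.2 fun σ' => ?_
  have hcont := ((hasDerivAt_mul_const (Δ σ σ')).const_add (H σ σ')).continuousAt.tendsto (x := 0)
  rw [zero_mul, add_zero] at hcont
  exact hcont.eventually (eventually_gt_nhds (hH σ σ'))

theorem deriv_edgePhi_line (hH : ∀ σ σ', 0 < H σ σ') :
    deriv (fun t => edgePhi q d ψ ψb fun σ σ' => H σ σ' + t * Δ σ σ') 0 =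
      edgePhiLineDeriv q d ψ ψb H Δ 0 :=
  (hasDerivAt_edgePhi_line (by simpa using hH)).deriv

theorem deriv_deriv_edgePhi_line (hH : ∀ σ σ', 0 < H σ σ') :
    deriv (deriv fun t => edgePhi q d ψ ψb fun σ σ' => H σ σ' + t * Δ σ σ') 0 =
      ((d : ℝ) - 1) * ∑ σ, marg q Δ σ ^ 2 / marg q H σ -
        (d / 2 : ℝ) * ∑ σ, ∑ σ', Δ σ σ' ^ 2 / H σ σ' := by
  have hderiv : (deriv fun t => edgePhi q d ψ ψb fun σ σ' => H σ σ' + t * Δ σ σ') =ᶠ[𝓝 0]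
      edgePhiLineDeriv q d ψ ψb H Δ :=
    (eventually_pos_line hH).mono fun t ht => (hasDerivAt_edgePhi_line ht).deriv
  exact hderiv.deriv_eq.trans (hasDerivAt_edgePhiLineDeriv hH).deriv

theorem line_mem_edgeSimplex (hH : H ∈ edgeSimplex q) (hΔ : ∀ σ σ', Δ σ σ' = Δ σ' σ)
    (hΔsum : ∑ σ, ∑ σ', Δ σ σ' = 0) {t : ℝ} (ht : ∀ σ σ', 0 < H σ σ' + t * Δ σ σ') :
    (fun σ σ' => H σ σ' + t * Δ σ σ') ∈ edgeSimplex q := by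
  refine ⟨fun σ σ' => (ht σ σ').le, fun σ σ' => ?_, ?_⟩
  · show H σ σ' + t * Δ σ σ' = H σ' σ + t * Δ σ' σ
    rw [hH.2.1, hΔ]
  simp only [Finset.sum_add_distrib, ← Finset.mul_sum, hH.2.2, hΔsum, mul_zero, add_zero]

theorem IsLocalMaxOn.isLocalMax_edgePhi_line
    (hmax : IsLocalMaxOn (edgePhi q d ψ ψb) (edgeSimplex q) H) (hH : H ∈ edgeSimplex q)
    (hHpos : ∀ σ σ', 0 < H σ σ') (hΔ : ∀ σ σ', Δ σ σ' = Δ σ' σ)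
    (hΔsum : ∑ σ, ∑ σ', Δ σ σ' = 0) :
    IsLocalMax (fun t => edgePhi q d ψ ψb fun σ σ' => H σ σ' + t * Δ σ σ') 0 :=
  hmax.isLocalMax_comp_line
    ((eventually_pos_line hHpos).mono fun _ ht => line_mem_edgeSimplex hH hΔ hΔsum ht)

end EdgeLine

section TensorPsi

variable {q : ℕ} {ψ : Fin q → Fin q → ℝ} {g : Fin q → ℝ}

theorem tensorPsi_symm (hψ : ∀ σ σ', ψ σ σ' = ψ σ' σ) (σ σ' : Fin q) :
    tensorPsi q ψ g σ σ' = tensorPsi q ψ g σ' σ := by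
  simp only [tensorPsi, hψ σ σ']
  ring

theorem marg_tensorPsi (σ : Fin q) :
    marg q (tensorPsi q ψ g) σ =
      g σ * (∑ σ', ψ σ σ' * g σ') / ∑ τ, ∑ τ', ψ τ τ' * g τ * g τ' := by
  simp only [marg, tensorPsi, ← Finset.sum_div, Finset.mul_sum]
  congr 1
  exact Finset.sum_congr rfl fun σ' _ => by ring

theorem sum_sum_psi_mul_pos [Nonempty (Fin q)] (hψ : ∀ σ σ', 0 < ψ σ σ') (hg : ∀ σ, 0 < g σ) :
    0 < ∑ τ, ∑ τ', ψ τ τ' * g τ * g τ' :=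
  Finset.sum_pos (fun τ _ => Finset.sum_pos
    (fun τ' _ => mul_pos (mul_pos (hψ τ τ') (hg τ)) (hg τ')) Finset.univ_nonempty)
    Finset.univ_nonempty

theorem tensorPsi_pos (hψ : ∀ σ σ', 0 < ψ σ σ') (hg : ∀ σ, 0 < g σ) (σ σ' : Fin q) :
    0 < tensorPsi q ψ g σ σ' := by
  have : Nonempty (Fin q) := ⟨σ⟩
  exact div_pos (mul_pos (mul_pos (hψ σ σ') (hg σ)) (hg σ')) (sum_sum_psi_mul_pos hψ hg)

theorem tensorPsi_mem_edgeSimplex [Nonempty (Fin q)] (hψsymm : ∀ σ σ', ψ σ σ' = ψ σ' σ)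
    (hψ : ∀ σ σ', 0 < ψ σ σ') (hg : ∀ σ, 0 < g σ) : tensorPsi q ψ g ∈ edgeSimplex q := by
  refine ⟨fun σ σ' => (tensorPsi_pos hψ hg σ σ').le, tensorPsi_symm hψsymm, ?_⟩
  simp only [tensorPsi, ← Finset.sum_div]
  exact div_self (sum_sum_psi_mul_pos hψ hg).ne'

def tensorPsiTangent (q : ℕ) (ψ : Fin q → Fin q → ℝ) (g e : Fin q → ℝ) : Fin q → Fin q → ℝ :=
  fun σ σ' => ψ σ σ' * (e σ * g σ' + g σ * e σ')

theorem tensorPsiTangent_symm (hψ : ∀ σ σ', ψ σ σ' = ψ σ' σ)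
    (g e : Fin q → ℝ) (σ σ' : Fin q) :
    tensorPsiTangent q ψ g e σ σ' = tensorPsiTangent q ψ g e σ' σ := by
  simp only [tensorPsiTangent, hψ σ σ']
  ring

end TensorPsi

section BPFixedPoint

variable {q d : ℕ} {ψ : Fin q → Fin q → ℝ} {ψb : Fin q → ℝ} {h : Fin q → ℝ}

theorem sum_psi_mul_pos_of_mem_simplex (hψ : ∀ σ σ', 0 < ψ σ σ') (hh : h ∈ simplex q)
    (σ : Fin q) : 0 < ∑ σ', ψ σ σ' * h σ' := by
  obtain ⟨τ, -, hτ⟩ := Finset.exists_lt_of_sum_lt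
    (show ∑ _ : Fin q, (0 : ℝ) < ∑ τ, h τ by simp [hh.2])
  exact Finset.sum_pos' (fun τ _ => mul_nonneg (hψ σ τ).le (hh.1 τ))
    ⟨τ, Finset.mem_univ _, mul_pos (hψ σ τ) hτ⟩

theorem sum_psib_mul_pow_pos [Nonempty (Fin q)] (hψ : ∀ σ σ', 0 < ψ σ σ')
    (hψb : ∀ σ, 0 < ψb σ) (hh : h ∈ simplex q) :
    0 < ∑ τ, ψb τ * (∑ σ', ψ τ σ' * h σ') ^ (d - 1) :=
  Finset.sum_pos (fun τ _ => mul_pos (hψb τ) (pow_pos (sum_psi_mul_pos_of_mem_simplex hψ hh τ) _))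
    Finset.univ_nonempty

theorem pos_of_mem_bpFixedPts (hψ : ∀ σ σ', 0 < ψ σ σ') (hψb : ∀ σ, 0 < ψb σ)
    (hh : h ∈ bpFixedPts q d ψ ψb) (σ : Fin q) : 0 < h σ := by
  have : Nonempty (Fin q) := ⟨σ⟩
  rw [← congrFun hh.2 σ]
  exact div_pos (mul_pos (hψb σ) (pow_pos (sum_psi_mul_pos_of_mem_simplex hψ hh.1 σ) _))
    (sum_psib_mul_pow_pos hψ hψb hh.1)

theorem psib_mul_pow_eq_of_mem_bpFixedPts (hψ : ∀ σ σ', 0 < ψ σ σ') (hψb : ∀ σ, 0 < ψb σ)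
    (hh : h ∈ bpFixedPts q d ψ ψb) (σ : Fin q) :
    ψb σ * (∑ σ', ψ σ σ' * h σ') ^ (d - 1) =
      (∑ τ, ψb τ * (∑ σ', ψ τ σ' * h σ') ^ (d - 1)) * h σ := by
  have : Nonempty (Fin q) := ⟨σ⟩
  rw [← congrFun hh.2 σ, BPmap, mul_div_cancel₀ _ (sum_psib_mul_pow_pos hψ hψb hh.1).ne']

theorem edgePhiLineDeriv_tensorPsi_eq_zero [Nonempty (Fin q)] {Δ : Fin q → Fin q → ℝ}
    (hd : 1 ≤ d) (hψ : ∀ σ σ', 0 < ψ σ σ') (hψb : ∀ σ, 0 < ψb σ)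
    (hh : h ∈ bpFixedPts q d ψ ψb) (hΔ : ∀ σ σ', Δ σ σ' = Δ σ' σ)
    (hΔsum : ∑ σ, ∑ σ', Δ σ σ' = 0) :
    edgePhiLineDeriv q d ψ ψb (tensorPsi q ψ h) Δ 0 = 0 := by
  set z := ∑ τ, ∑ τ', ψ τ τ' * h τ * h τ'
  set Z := ∑ τ, ψb τ * (∑ σ', ψ τ σ' * h σ') ^ (d - 1)
  have hpos := pos_of_mem_bpFixedPts hψ hψb hh
  have hS := sum_psi_mul_pos_of_mem_simplex hψ hh.1
  have hz : 0 < z := sum_sum_psi_mul_pos hψ hpos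
  have hZ : 0 < Z := sum_psib_mul_pow_pos hψ hψb hh.1
  have hlogK : ∀ σ σ', log (tensorPsi q ψ h σ σ') + 1 =
      log (ψ σ σ') + (log (h σ) + log (h σ')) + (1 - log z) := fun σ σ' => by
    rw [tensorPsi, log_div (by have := hψ σ σ'; have := hpos σ; have := hpos σ'; positivity) hz.ne',
      log_mul (mul_pos (hψ σ σ') (hpos σ)).ne' (hpos σ').ne', log_mul (hψ σ σ').ne' (hpos σ).ne']
    ring
  have hbracket : ∀ σ, log (ψb σ) + ((d : ℝ) - 1) * (log (marg q (tensorPsi q ψ h) σ) + 1) -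
      d * log (h σ) = log Z - ((d : ℝ) - 1) * log z + ((d : ℝ) - 1) := fun σ => by
    have hfix := congrArg log (psib_mul_pow_eq_of_mem_bpFixedPts hψ hψb hh σ)
    rw [log_mul (hψb σ).ne' (pow_pos (hS σ) _).ne', log_mul hZ.ne' (hpos σ).ne', log_pow,
      Nat.cast_sub hd, Nat.cast_one] at hfix
    rw [marg_tensorPsi, log_div (mul_pos (hpos σ) (hS σ)).ne' hz.ne',
      log_mul (hpos σ).ne' (hS σ).ne']
    linear_combination hfix
  have hsplit : ∑ σ, ∑ σ', (log (tensorPsi q ψ h σ σ') + 1) * Δ σ σ' =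
      ∑ σ, ∑ σ', Δ σ σ' * log (ψ σ σ') + 2 * ∑ σ, log (h σ) * marg q Δ σ := by
    have hterm : ∀ σ σ', (log (tensorPsi q ψ h σ σ') + 1) * Δ σ σ' = Δ σ σ' * log (ψ σ σ') +
        (log (h σ) + log (h σ')) * Δ σ σ' + (1 - log z) * Δ σ σ' := fun σ σ' => by
      rw [hlogK]; ring
    simp only [hterm, Finset.sum_add_distrib, sum_sum_add_mul_of_symm hΔ, ← Finset.mul_sum,
      hΔsum, mul_zero, add_zero]
  have hpsib : ∀ σ, marg q Δ σ * log (ψb σ) =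
      marg q Δ σ * (log Z - ((d : ℝ) - 1) * log z + ((d : ℝ) - 1)) -
        ((d : ℝ) - 1) * ((log (marg q (tensorPsi q ψ h) σ) + 1) * marg q Δ σ) +
        d * (log (h σ) * marg q Δ σ) := fun σ => by
    rw [← hbracket σ]; ring
  simp only [edgePhiLineDeriv, zero_mul, add_zero, hsplit, hpsib, Finset.sum_add_distrib,
    Finset.sum_sub_distrib, ← Finset.mul_sum, ← Finset.sum_mul]
  rw [show ∑ σ, marg q Δ σ = 0 from hΔsum]
  ring

end BPFixedPoint

section Potts

variable {q : ℕ} {β : ℝ}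

theorem pottsPsi_eq (σ σ' : Fin q) :
    pottsPsi q β σ σ' = 1 + if σ = σ' then exp β - 1 else 0 := by
  unfold pottsPsi
  split_ifs <;> simp

theorem pottsPsi_pos (σ σ' : Fin q) : 0 < pottsPsi q β σ σ' := exp_pos _

theorem pottsPsi_symm (σ σ' : Fin q) : pottsPsi q β σ σ' = pottsPsi q β σ' σ := by
  simp only [pottsPsi, eq_comm]

theorem pottsPsib_pos (B : ℝ) (σ : Fin q) : 0 < pottsPsib q B σ := exp_pos _

theorem sum_pottsPsi_mul (f : Fin q → ℝ) (σ : Fin q) :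
    ∑ σ', pottsPsi q β σ σ' * f σ' = ∑ σ', f σ' + (exp β - 1) * f σ := by
  simp [pottsPsi_eq, add_mul, Finset.sum_add_distrib, ite_mul]

theorem sum_sum_pottsPsi_mul_mul (f g : Fin q → ℝ) :
    ∑ σ, ∑ σ', pottsPsi q β σ σ' * f σ * g σ' =
      (∑ σ, f σ) * (∑ σ, g σ) + (exp β - 1) * ∑ σ, f σ * g σ := by
  have hrow : ∀ σ, ∑ σ', pottsPsi q β σ σ' * f σ * g σ' =
      f σ * (∑ σ', g σ') + (exp β - 1) * (f σ * g σ) := fun σ => by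
    simp only [mul_right_comm _ (f σ), ← Finset.sum_mul, sum_pottsPsi_mul]
    ring
  simp only [hrow, Finset.sum_add_distrib, ← Finset.sum_mul, ← Finset.mul_sum]

end Potts

section PottsTangent

variable {q d : ℕ} {β : ℝ} {ψb h e : Fin q → ℝ}

theorem marg_tensorPsi_potts (hh : ∑ σ, h σ = 1) (σ : Fin q) :
    marg q (tensorPsi q (pottsPsi q β) h) σ =
      h σ * (1 + (exp β - 1) * h σ) / ∑ τ, ∑ τ', pottsPsi q β τ τ' * h τ * h τ' := by
  rw [marg_tensorPsi, sum_pottsPsi_mul, hh]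

theorem marg_tensorPsiTangent_potts (hh : ∑ σ, h σ = 1) (he : ∑ σ, e σ = 0) (σ : Fin q) :
    marg q (tensorPsiTangent q (pottsPsi q β) h e) σ = e σ * (1 + 2 * (exp β - 1) * h σ) := by
  have hsplit : marg q (tensorPsiTangent q (pottsPsi q β) h e) σ =
      e σ * ∑ σ', pottsPsi q β σ σ' * h σ' + h σ * ∑ σ', pottsPsi q β σ σ' * e σ' := by
    simp only [marg, tensorPsiTangent, Finset.mul_sum, ← Finset.sum_add_distrib]
    exact Finset.sum_congr rfl fun σ' _ => by ring
  rw [hsplit, sum_pottsPsi_mul, sum_pottsPsi_mul, hh, he]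
  ring

theorem sum_sum_tensorPsiTangent_potts_eq_zero (hh : ∑ σ, h σ = 1) (he : ∑ σ, e σ = 0)
    (heh : ∑ σ, e σ * h σ = 0) : ∑ σ, ∑ σ', tensorPsiTangent q (pottsPsi q β) h e σ σ' = 0 := by
  have hrow : ∀ σ, ∑ σ', tensorPsiTangent q (pottsPsi q β) h e σ σ' =
      e σ + 2 * (exp β - 1) * (e σ * h σ) := fun σ => by
    have := marg_tensorPsiTangent_potts (β := β) hh he σ
    rw [marg] at this
    rw [this]
    ring
  simp only [hrow, Finset.sum_add_distrib, ← Finset.mul_sum, he, heh, mul_zero, add_zero]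

theorem sum_sq_marg_div_marg_potts (hh : ∑ σ, h σ = 1) (he : ∑ σ, e σ = 0) :
    ∑ σ, marg q (tensorPsiTangent q (pottsPsi q β) h e) σ ^ 2 /
        marg q (tensorPsi q (pottsPsi q β) h) σ =
      (∑ τ, ∑ τ', pottsPsi q β τ τ' * h τ * h τ') *
        ∑ σ, e σ ^ 2 * (1 + 2 * (exp β - 1) * h σ) ^ 2 / (h σ * (1 + (exp β - 1) * h σ)) := by
  rw [Finset.mul_sum]
  refine Finset.sum_congr rfl fun σ _ => ?_
  rw [marg_tensorPsiTangent_potts hh he, marg_tensorPsi_potts hh, div_div_eq_mul_div]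
  ring

theorem sum_sum_sq_tensorPsiTangent_div_potts (hpos : ∀ σ, 0 < h σ) (hh : ∑ σ, h σ = 1)
    (he : ∑ σ, e σ = 0) :
    ∑ σ, ∑ σ', tensorPsiTangent q (pottsPsi q β) h e σ σ' ^ 2 /
        tensorPsi q (pottsPsi q β) h σ σ' =
      (∑ τ, ∑ τ', pottsPsi q β τ τ' * h τ * h τ') *
        (2 * ∑ σ, e σ ^ 2 / h σ + 4 * (exp β - 1) * ∑ σ, e σ ^ 2) := by
  set z := ∑ τ, ∑ τ', pottsPsi q β τ τ' * h τ * h τ'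
  have hterm : ∀ σ σ', tensorPsiTangent q (pottsPsi q β) h e σ σ' ^ 2 /
      tensorPsi q (pottsPsi q β) h σ σ' =
      z * (pottsPsi q β σ σ' * (e σ ^ 2 / h σ) * h σ' + 2 * (pottsPsi q β σ σ' * e σ * e σ') +
        pottsPsi q β σ σ' * h σ * (e σ' ^ 2 / h σ')) := fun σ σ' => by
    have := (pottsPsi_pos (β := β) σ σ').ne'
    have := (hpos σ).ne'
    have := (hpos σ').ne'
    simp only [tensorPsiTangent, tensorPsi]
    field_simp
    ring
  have hcancel : ∀ σ, e σ ^ 2 / h σ * h σ = e σ ^ 2 := fun σ => div_mul_cancel₀ _ (hpos σ).ne'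
  simp only [hterm, ← Finset.mul_sum, Finset.sum_add_distrib, sum_sum_pottsPsi_mul_mul, hh, he,
    hcancel, mul_comm (h _), ← sq]
  ring

theorem deriv_deriv_edgePhi_potts_tangent (hpos : ∀ σ, 0 < h σ) (hh : ∑ σ, h σ = 1)
    (he : ∑ σ, e σ = 0) :
    deriv (deriv fun t => edgePhi q d (pottsPsi q β) ψb fun σ σ' =>
        tensorPsi q (pottsPsi q β) h σ σ' + t * tensorPsiTangent q (pottsPsi q β) h e σ σ') 0 =
      (∑ τ, ∑ τ', pottsPsi q β τ τ' * h τ * h τ') *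
        ∑ σ, e σ ^ 2 * (1 + 2 * (exp β - 1) * h σ) * ((exp β - 1) * h σ * ((d : ℝ) - 2) - 1) /
          (h σ * (1 + (exp β - 1) * h σ)) := by
  set b := exp β - 1
  have hS : ∀ σ, 0 < 1 + b * h σ := fun σ => by
    have := sum_psi_mul_pos_of_mem_simplex (ψ := pottsPsi q β) (fun _ _ => pottsPsi_pos _ _)
      ⟨fun τ => (hpos τ).le, hh⟩ σ
    rwa [sum_pottsPsi_mul, hh] at this
  have hterm : ∀ σ, e σ ^ 2 * (1 + 2 * b * h σ) * (b * h σ * ((d : ℝ) - 2) - 1) /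
      (h σ * (1 + b * h σ)) = ((d : ℝ) - 1) * (e σ ^ 2 * (1 + 2 * b * h σ) ^ 2 /
        (h σ * (1 + b * h σ))) - d * (e σ ^ 2 / h σ) - 2 * d * b * e σ ^ 2 := fun σ => by
    have := (hpos σ).ne'
    have := (hS σ).ne'
    field_simp
    ring
  rw [deriv_deriv_edgePhi_line (tensorPsi_pos (fun _ _ => pottsPsi_pos _ _) hpos),
    sum_sq_marg_div_marg_potts hh he, sum_sum_sq_tensorPsiTangent_div_potts hpos hh he]
  simp only [hterm, Finset.sum_sub_distrib, ← Finset.mul_sum]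
  ring

theorem deriv_deriv_edgePhi_potts_tangent_pos (hd : 3 ≤ d) (hβ : 0 < β) (hpos : ∀ σ, 0 < h σ)
    (hh : ∑ σ, h σ = 1) (he : ∑ σ, e σ = 0)
    (hsupp : ∀ σ, e σ ≠ 0 → 1 / (exp β - 1) / ((d : ℝ) - 2) < h σ) {σ₀ : Fin q}
    (hσ₀ : e σ₀ ≠ 0) :
    0 < deriv (deriv fun t => edgePhi q d (pottsPsi q β) ψb fun σ σ' =>
        tensorPsi q (pottsPsi q β) h σ σ' + t * tensorPsiTangent q (pottsPsi q β) h e σ σ') 0 := by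
  have : Nonempty (Fin q) := ⟨σ₀⟩
  have hb : 0 < exp β - 1 := by linarith [add_one_lt_exp hβ.ne']
  have hd2 : (0 : ℝ) < d - 2 := by
    have : (3 : ℝ) ≤ d := by exact_mod_cast hd
    linarith
  have hterm : ∀ σ, e σ ≠ 0 → 0 < e σ ^ 2 * (1 + 2 * (exp β - 1) * h σ) *
      ((exp β - 1) * h σ * ((d : ℝ) - 2) - 1) / (h σ * (1 + (exp β - 1) * h σ)) := fun σ hσ => by
    have := hpos σ
    have hv := hsupp σ hσ
    rw [div_div, div_lt_iff₀ (mul_pos hb hd2)] at hv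
    have : 0 < (exp β - 1) * h σ * ((d : ℝ) - 2) - 1 := by linarith
    positivity
  rw [deriv_deriv_edgePhi_potts_tangent hpos hh he]
  refine mul_pos (sum_sum_psi_mul_pos (fun _ _ => pottsPsi_pos _ _) hpos)
    (Finset.sum_pos' (fun σ _ => ?_) ⟨σ₀, Finset.mem_univ _, hterm σ₀ hσ₀⟩)
  rcases eq_or_ne (e σ) 0 with hσ | hσ
  · simp [hσ]
  · exact (hterm σ hσ).le

end PottsTangent

theorem potts_not_local_max_of_two_high_general
    (q d : ℕ) (hd : 3 ≤ d) (β B : ℝ) (hβ : 0 < β)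
    (h : Fin q → ℝ) (hfix : h ∈ bpFixedPts q d (pottsPsi q β) (pottsPsib q B))
    (σ1 σ2 : Fin q) (hne : σ1 ≠ σ2) (heq : h σ1 = h σ2)
    (hgt : (1 / (Real.exp β - 1)) / ((d : ℝ) - 2) < h σ1) :
    ¬ IsLocalMaxOn (edgePhi q d (pottsPsi q β) (pottsPsib q B)) (edgeSimplex q)
        (tensorPsi q (pottsPsi q β) h) := by
  intro hmax
  have : Nonempty (Fin q) := ⟨σ1⟩
  have hψ : ∀ σ σ', 0 < pottsPsi q β σ σ' := pottsPsi_pos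
  have hψsymm : ∀ σ σ', pottsPsi q β σ σ' = pottsPsi q β σ' σ := pottsPsi_symm
  have hpos := pos_of_mem_bpFixedPts hψ (pottsPsib_pos B) hfix
  have hK := tensorPsi_pos hψ hpos
  set e : Fin q → ℝ := Pi.single σ1 1 - Pi.single σ2 1
  have he : ∑ σ, e σ = 0 := by simp [e]
  have hΔ := tensorPsiTangent_symm hψsymm h e
  have hΔsum := sum_sum_tensorPsiTangent_potts_eq_zero (β := β) hfix.1.2 he
    (by simp [e, sub_mul, Pi.single_apply, heq])
  have hsupp : ∀ σ, e σ ≠ 0 → 1 / (exp β - 1) / ((d : ℝ) - 2) < h σ := fun σ hσ => by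
    rcases eq_or_ne σ σ1 with rfl | h1
    · exact hgt
    rcases eq_or_ne σ σ2 with rfl | h2
    · rwa [← heq]
    simp [e, h1, h2] at hσ
  refine not_isLocalMax_of_deriv_deriv_pos ?_ ?_ ?_
    (hmax.isLocalMax_edgePhi_line (tensorPsi_mem_edgeSimplex hψsymm hψ hpos) hK hΔ hΔsum)
  · exact deriv_deriv_edgePhi_potts_tangent_pos hd hβ hpos hfix.1.2 he hsupp (σ₀ := σ1)
      (by simp [e, hne])
  · rw [deriv_edgePhi_line hK]
    exact edgePhiLineDeriv_tensorPsi_eq_zero (by omega) hψ (pottsPsib_pos B) hfix hΔ hΔsum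
  · exact (hasDerivAt_edgePhi_line (by simpa using hK)).continuousAt

/-- a Potts BP fixed point with two distinct spins sharing a common value
strictly above `v` never corresponds (via `h ↦ h ⊗_ψ h`) to a local maximizer of the edge
Bethe functional. -/
theorem potts_not_local_max_of_two_high
    (q d : ℕ) (hq : 2 ≤ q) (hd : 3 ≤ d) (β B : ℝ) (hβ : 0 < β) (hB : 0 ≤ B)
    (h : Fin q → ℝ) (hfix : h ∈ bpFixedPts q d (pottsPsi q β) (pottsPsib q B))
    (σ1 σ2 : Fin q) (hne : σ1 ≠ σ2) (heq : h σ1 = h σ2)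
    (hgt : (1 / (Real.exp β - 1)) / ((d : ℝ) - 2) < h σ1) :
    ¬ IsLocalMaxOn (edgePhi q d (pottsPsi q β) (pottsPsib q B)) (edgeSimplex q)
        (tensorPsi q (pottsPsi q β) h) :=
  potts_not_local_max_of_two_high_general q d hd β B hβ h hfix σ1 σ2 hne heq hgt
end
end
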